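/- If T ⊂ N is an F_p-subspace with dim_{F_p} T ≤ σ₀, then (T ⊗_{F_p} k) ∩ φ(K) = 0. If moreover dim_{F_p} T < σ₀, then (T ⊗_{F_p} k) ∩ (K + φ(K)) = 0. -/
import Mathlib


open Module Submodule Function

/-- On a perfect field the Frobenius is surjective, so images of submodules under
Frobenius-semilinear maps are again submodules. -/
instance frobSurj (k : Type*) [Field k] (p : ℕ) [Fact p.Prime] [CharP k p] [PerfectRing k p] :
    RingHomSurjective (frobenius k p) := ⟨surjective_frobenius k p⟩


variable {k : Type*} [Field k] {p : ℕ} [Fact p.Prime] [CharP k p] [PerfectRing k p]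
  {V : Type*} [AddCommGroup V] [Module k V]

/-- `φ^i(K)`, the `i`-th iterated image of `K` under the `p`-semilinear map `φ`. -/
def iterMap (φ : V →ₛₗ[frobenius k p] V) (K : Submodule k V) (i : ℕ) : Submodule k V :=
  (Submodule.map φ)^[i] K

/-- `φ^{-i}(K)`, the `i`-th iterated preimage of `K` under `φ`. -/
def iterComap (φ : V →ₛₗ[frobenius k p] V) (K : Submodule k V) (i : ℕ) : Submodule k V :=
  (Submodule.comap φ)^[i] K

/-- The smallest `φ`-stable subspace containing `K`: `U = Σ_{i ≥ 0} φ^i(K)`. -/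
def bigU (φ : V →ₛₗ[frobenius k p] V) (K : Submodule k V) : Submodule k V :=
  ⨆ i : ℕ, iterMap φ K i

/-- The flag `U_m`: `U_m = φ^{-(σ₀-m)}(K) ∩ ⋯ ∩ φ^{-1}(K) ∩ K` for `m ≤ σ₀`, and
`U_m = K + φ(K) + ⋯ + φ^{m-σ₀}(K)` for `m ≥ σ₀` (so `U_{σ₀} = K`,
`U_{σ₀+1} = K + φ(K)`). -/
def flagU (σ₀ : ℕ) (φ : V →ₛₗ[frobenius k p] V) (K : Submodule k V) (m : ℕ) : Submodule k V :=
  if m ≤ σ₀ then ⨅ i ∈ Finset.range (σ₀ - m + 1), iterComap φ K i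
  else ⨆ i ∈ Finset.range (m - σ₀ + 1), iterMap φ K i



section ChainLemmas

variable {k : Type*} [Field k] {p : ℕ} [Fact p.Prime] [CharP k p] [PerfectRing k p]
  {V : Type*} [AddCommGroup V] [Module k V]

lemma flagU_self (σ₀ : ℕ) (φ : V →ₛₗ[frobenius k p] V) (K : Submodule k V) :
    flagU σ₀ φ K σ₀ = K := by
  simp [flagU, Nat.sub_self, Finset.range_one, iterComap]

lemma flagU_succ_self (σ₀ : ℕ) (h : 1 ≤ σ₀) (φ : V →ₛₗ[frobenius k p] V)
    (K : Submodule k V) : flagU σ₀ φ K (σ₀ + 1) = K ⊔ Submodule.map φ K := by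
  rw [flagU, if_neg (by omega), show σ₀ + 1 - σ₀ + 1 = 2 from by omega]
  simp [Finset.range_add_one, Finset.range_one, iterMap, iSup_or, iSup_sup_eq, sup_comm]

lemma flag_step (φ : V →ₛₗ[frobenius k p] V) (hinj : Function.Injective φ)
    (σ₀ : ℕ) (K : Submodule k V)
    (hrec1 : ∀ m : ℕ, 0 < m → m < 2 * σ₀ →
      flagU σ₀ φ K (m + 1) = flagU σ₀ φ K m ⊔ Submodule.map φ (flagU σ₀ φ K m))
    (hrec2 : ∀ m : ℕ, 0 < m → m < 2 * σ₀ →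
      Submodule.map φ (flagU σ₀ φ K (m - 1)) =
        flagU σ₀ φ K m ⊓ Submodule.map φ (flagU σ₀ φ K m))
    {j : ℕ} (hj1 : 0 < j) (hj2 : j < 2 * σ₀) {v : V}
    (hv : v ∈ flagU σ₀ φ K j) (hv' : v ∉ flagU σ₀ φ K (j - 1)) :
    φ v ∈ flagU σ₀ φ K (j + 1) ∧ φ v ∉ flagU σ₀ φ K j := by
  constructor
  · rw [hrec1 j hj1 hj2]
    exact Submodule.mem_sup_right (Submodule.mem_map_of_mem hv)
  · intro h
    have hmem : φ v ∈ Submodule.map φ (flagU σ₀ φ K (j - 1)) := by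
      rw [hrec2 j hj1 hj2]
      exact ⟨h, Submodule.mem_map_of_mem hv⟩
    obtain ⟨w, hw, hwv⟩ := hmem
    exact hv' (by rwa [hinj hwv] at hw)

lemma chain_finrank [FiniteDimensional k V]
    (φ : V →ₛₗ[frobenius k p] V) (hinj : Function.Injective φ)
    (σ₀ : ℕ) (K : Submodule k V)
    (hrec1 : ∀ m : ℕ, 0 < m → m < 2 * σ₀ →
      flagU σ₀ φ K (m + 1) = flagU σ₀ φ K m ⊔ Submodule.map φ (flagU σ₀ φ K m))
    (hrec2 : ∀ m : ℕ, 0 < m → m < 2 * σ₀ →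
      Submodule.map φ (flagU σ₀ φ K (m - 1)) =
        flagU σ₀ φ K m ⊓ Submodule.map φ (flagU σ₀ φ K m))
    (X : Submodule k V) (hX : Submodule.map φ X ≤ X)
    {m : ℕ} (hm1 : 0 < m) (hm2 : m ≤ 2 * σ₀) {u : V}
    (hu : u ∈ X) (humem : u ∈ flagU σ₀ φ K m) (hunot : u ∉ flagU σ₀ φ K (m - 1)) :
    2 * σ₀ - m + 1 ≤ finrank k X := by
  have key : ∀ i, m + i ≤ 2 * σ₀ →
      (⇑φ)^[i] u ∈ X ∧ (⇑φ)^[i] u ∈ flagU σ₀ φ K (m + i) ∧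
        (⇑φ)^[i] u ∉ flagU σ₀ φ K (m + i - 1) := by
    intro i
    induction i with
    | zero => exact fun _ => ⟨hu, humem, hunot⟩
    | succ i ih =>
      intro hle
      obtain ⟨h1, h2, h3⟩ := ih (by omega)
      have hstep := flag_step φ hinj σ₀ K hrec1 hrec2 (j := m + i) (by omega) (by omega) h2 h3
      rw [Function.iterate_succ_apply']
      refine ⟨hX ⟨_, h1, rfl⟩, ?_, ?_⟩
      · rw [show m + (i + 1) = (m + i) + 1 from by omega]
        exact hstep.1
      · rw [show m + (i + 1) - 1 = m + i from by omega]
        exact hstep.2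
  have chain : ∀ i, m + i ≤ 2 * σ₀ →
      i + 1 ≤ finrank k ↥(X ⊓ flagU σ₀ φ K (m + i)) := by
    intro i
    induction i with
    | zero =>
      intro _
      have hne : (⊥ : Submodule k V) < X ⊓ flagU σ₀ φ K (m + 0) := by
        rw [bot_lt_iff_ne_bot, Submodule.ne_bot_iff]
        refine ⟨u, ⟨hu, by simpa using humem⟩, fun h => hunot ?_⟩
        rw [h]
        exact (flagU σ₀ φ K (m - 1)).zero_mem
      have := Submodule.finrank_lt_finrank_of_lt hne
      have h0 : finrank k (⊥ : Submodule k V) = 0 := finrank_bot k V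
      omega
    | succ i ih =>
      intro hle
      have h1 := ih (by omega)
      obtain ⟨hx, hm', hn'⟩ := key (i + 1) hle
      have hmono : flagU σ₀ φ K (m + i) ≤ flagU σ₀ φ K (m + (i + 1)) := by
        rw [show m + (i + 1) = (m + i) + 1 from by omega,
          hrec1 (m + i) (by omega) (by omega)]
        exact le_sup_left
      have hlt : X ⊓ flagU σ₀ φ K (m + i) < X ⊓ flagU σ₀ φ K (m + (i + 1)) := by
        rw [SetLike.lt_iff_le_and_exists]
        refine ⟨inf_le_inf_left X hmono, (⇑φ)^[i + 1] u, ⟨hx, hm'⟩, fun h => ?_⟩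
        rw [show m + (i + 1) - 1 = m + i from by omega] at hn'
        exact hn' h.2
      have := Submodule.finrank_lt_finrank_of_lt hlt
      omega
  have hfin := chain (2 * σ₀ - m) (by omega)
  rw [show m + (2 * σ₀ - m) = 2 * σ₀ from by omega] at hfin
  have hle := Submodule.finrank_mono (inf_le_left :
    X ⊓ flagU σ₀ φ K (2 * σ₀) ≤ X)
  omega

end ChainLemmas

open TensorProduct

variable {p : ℕ} [Fact p.Prime]
  {k : Type*} [Field k] [IsAlgClosed k] [CharP k p] [Algebra (ZMod p) k]
  {N : Type*} [AddCommGroup N] [Module (ZMod p) N] [FiniteDimensional (ZMod p) N]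

/-- The `F_p`-subspace `T ⊂ N` base-changed to `k`, viewed inside `N ⊗_{F_p} k`. -/
def baseChangeSub (T : Submodule (ZMod p) N) : Submodule k (k ⊗[ZMod p] N) :=
  Submodule.span k ((fun v : N => (1 : k) ⊗ₜ[ZMod p] v) '' (T : Set N))

/-- if `T ⊂ N` has `dim_{F_p} T ≤ σ₀` then `(T ⊗ k) ∩ φ(K) = 0`, and if
`dim_{F_p} T < σ₀` then `(T ⊗ k) ∩ (K + φ(K)) = 0`. -/
theorem baseChange_meets_K_trivially
    (φ : (k ⊗[ZMod p] N) →ₛₗ[frobenius k p] (k ⊗[ZMod p] N))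
    (hφbij : Function.Bijective φ)
    (hφ : ∀ (c : k) (v : N), φ (c ⊗ₜ[ZMod p] v) = (c ^ p) ⊗ₜ[ZMod p] v)
    (σ₀ : ℕ) (hσ₀ : 1 ≤ σ₀) (K : Submodule k (k ⊗[ZMod p] N))
    (hK : finrank k K = σ₀)
    (hKφ : finrank k ↥(K ⊔ Submodule.map φ K) = σ₀ + 1)
    (hU : finrank k ↥(bigU φ K) = 2 * σ₀)
    (hflag : ∀ m : ℕ, m ≤ 2 * σ₀ → finrank k ↥(flagU σ₀ φ K m) = m)
    (hrec1 : ∀ m : ℕ, 0 < m → m < 2 * σ₀ →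
      flagU σ₀ φ K (m + 1) = flagU σ₀ φ K m ⊔ Submodule.map φ (flagU σ₀ φ K m))
    (hrec2 : ∀ m : ℕ, 0 < m → m < 2 * σ₀ →
      Submodule.map φ (flagU σ₀ φ K (m - 1)) =
        flagU σ₀ φ K m ⊓ Submodule.map φ (flagU σ₀ φ K m))
    (T : Submodule (ZMod p) N) :
    (finrank (ZMod p) T ≤ σ₀ → baseChangeSub T ⊓ Submodule.map φ K = ⊥) ∧
    (finrank (ZMod p) T < σ₀ → baseChangeSub T ⊓ (K ⊔ Submodule.map φ K) = ⊥) := by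
  classical
  set X := (baseChangeSub T : Submodule k (k ⊗[ZMod p] N)) with hXdef
  -- X is stable under φ, with equality
  have hXmap : Submodule.map φ X = X := by
    rw [hXdef]
    unfold baseChangeSub
    rw [Submodule.map_span, ← Set.image_comp]
    have himg : (⇑φ ∘ fun v : N => (1 : k) ⊗ₜ[ZMod p] v) =
        fun v : N => (1 : k) ⊗ₜ[ZMod p] v := by
      funext v
      simp [Function.comp, hφ]
    rw [himg]
  -- the rank of X is at most the F_p-rank of T
  have hXrank : finrank k X ≤ finrank (ZMod p) T := by
    have hle : X ≤ LinearMap.range (LinearMap.baseChange k T.subtype) := by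
      rw [hXdef]
      unfold baseChangeSub
      rw [Submodule.span_le]
      rintro x ⟨v, hv, rfl⟩
      exact ⟨(1 : k) ⊗ₜ[ZMod p] (⟨v, hv⟩ : T), by simp⟩
    calc finrank k X ≤ finrank k ↥(LinearMap.range (LinearMap.baseChange k T.subtype)) :=
          Submodule.finrank_mono hle
      _ ≤ finrank k (k ⊗[ZMod p] T) := LinearMap.finrank_range_le _
      _ = finrank (ZMod p) T := Module.finrank_baseChange
  have hflag0 : flagU σ₀ φ K 0 = ⊥ :=
    Submodule.finrank_eq_zero.mp (hflag 0 (by omega))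
  have hflagσ : flagU σ₀ φ K σ₀ = K := flagU_self σ₀ φ K
  have hflagσ1 : flagU σ₀ φ K (σ₀ + 1) = K ⊔ Submodule.map φ K :=
    flagU_succ_self σ₀ hσ₀ φ K
  -- common core: a nonzero element of X lying in flagU at level ≤ M gives a rank bound
  have core : ∀ (M : ℕ), M ≤ 2 * σ₀ → ∀ u : (k ⊗[ZMod p] N), u ≠ 0 → u ∈ X →
      u ∈ flagU σ₀ φ K M → 2 * σ₀ - M + 1 ≤ finrank k X := by
    intro M hM u hu0 huX huM
    have hex : ∃ m, u ∈ flagU σ₀ φ K m := ⟨M, huM⟩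
    have hmmem : u ∈ flagU σ₀ φ K (Nat.find hex) := Nat.find_spec hex
    have hmle : Nat.find hex ≤ M := Nat.find_le huM
    have hm0 : 0 < Nat.find hex := by
      rcases Nat.eq_zero_or_pos (Nat.find hex) with h | h
      · rw [h, hflag0] at hmmem
        exact absurd hmmem hu0
      · exact h
    have hmnot : u ∉ flagU σ₀ φ K (Nat.find hex - 1) :=
      Nat.find_min hex (by omega)
    have := chain_finrank φ hφbij.1 σ₀ K hrec1 hrec2 X (le_of_eq hXmap)
      hm0 (by omega) huX hmmem hmnot
    omega
  constructor
  · intro hT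
    by_contra hne
    obtain ⟨v, ⟨hvX, hvK⟩, hv0⟩ := (Submodule.ne_bot_iff _).mp hne
    obtain ⟨u, huK, huv⟩ := hvK
    have huX : u ∈ X := by
      have hv' : v ∈ Submodule.map φ X := by rw [hXmap]; exact hvX
      obtain ⟨w, hw, hwv⟩ := hv'
      have : w = u := hφbij.1 (hwv.trans huv.symm)
      exact this ▸ hw
    have hu0 : u ≠ 0 := fun h => hv0 (by rw [← huv, h, map_zero])
    have := core σ₀ (by omega) u hu0 huX (by rw [hflagσ]; exact huK)
    omega
  · intro hT
    by_contra hne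
    obtain ⟨v, ⟨hvX, hvK⟩, hv0⟩ := (Submodule.ne_bot_iff _).mp hne
    have := core (σ₀ + 1) (by omega) v hv0 hvX (by rw [hflagσ1]; exact hvK)
    omega
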